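/- For any two 2-forms η_1, η_2 ∈ Λ^2 W* on a 5-dimensional vector space W*, the map Λ^2 W* → Λ^4 W* ⊕ Λ^4 W* given by ω ↦ (ω ∧ η_1, ω ∧ η_2) has nonzero kernel; i.e., there exists a nonzero 2-form ω with ω ∧ η_1 = 0 and ω ∧ η_2 = 0. -/

import Mathlib

/-!
A 2-form `η` on an odd-dimensional space defines an alternating bilinear form on the dual, which
is therefore degenerate. A covector `f ≠ 0` in its kernel has `f ⌋ η = 0`, and projecting along a
vector `z` with `f z = 1` shows that `η ∈ ⋀²(ker f)`. So `η₁ ∈ ⋀²V₁` and `η₂ ∈ ⋀²V₂` for two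
hyperplanes of the 5-dimensional space; `⋀²(V₁ ∩ V₂)` has dimension at least `3`, while
`ω ↦ (ω η₁, ω η₂)` maps it into `⋀⁴V₁ × ⋀⁴V₂`, of dimension `2`.
-/

open Module

theorem Matrix.det_eq_zero_of_odd_card {n R : Type*} [Fintype n] [DecidableEq n] [CommRing R]
    (hn : Odd (Fintype.card n)) {A : Matrix n n R} (hdiag : ∀ i, A i i = 0)
    (hskew : ∀ i j, A j i = -A i j) : A.det = 0 := by
  -- The terms of `σ` and `σ⁻¹` cancel, and an involution of an odd set has a fixed point, where
  -- the zero diagonal kills the term; `det Aᵀ = det (-A)` alone would fail in characteristic 2.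
  have term_inv (σ : Equiv.Perm n) : (Equiv.Perm.sign σ⁻¹ • ∏ i, A (σ⁻¹ i) i : R) =
      -(Equiv.Perm.sign σ • ∏ i, A (σ i) i) := by
    calc (Equiv.Perm.sign σ⁻¹ • ∏ i, A (σ⁻¹ i) i : R)
        = Equiv.Perm.sign σ • ∏ i, -A (σ i) i := by
          rw [Equiv.Perm.sign_inv, ← Equiv.prod_comp σ]
          simp only [Equiv.Perm.inv_def, Equiv.symm_apply_apply, ← hskew]
      _ = -(Equiv.Perm.sign σ • ∏ i, A (σ i) i) := by
          rw [Finset.prod_neg, Finset.card_univ, hn.neg_one_pow, neg_one_mul, smul_neg]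
  rw [Matrix.det_apply]
  refine Finset.sum_ninvolution (fun σ => σ⁻¹) (fun σ => by rw [term_inv, add_neg_cancel])
    (fun σ hσ hinv => hσ ?_) (fun _ => Finset.mem_univ _) inv_inv
  obtain ⟨x, hx⟩ := Equiv.Perm.exists_fixed_point_of_prime (p := 2) (n := 1) (σ := σ)
    (Nat.two_dvd_ne_zero.mpr (Nat.odd_iff.mp hn))
    (by rw [pow_one, sq, ← mul_eq_one_iff_eq_inv.mpr hinv.symm])
  rw [Finset.prod_eq_zero (Finset.mem_univ x) (by rw [hx, hdiag]), smul_zero]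

theorem LinearMap.BilinForm.IsAlt.not_separatingLeft {R M : Type*} [CommRing R] [IsDomain R]
    [AddCommGroup M] [Module R M] [Module.Free R M] [Module.Finite R M]
    (hM : Odd (finrank R M)) {B : LinearMap.BilinForm R M} (hB : B.IsAlt) : ¬ B.SeparatingLeft := by
  classical
  intro hsep
  have hB' : B.Nondegenerate := hB.isRefl.nondegenerate_iff_separatingLeft.mpr hsep
  refine (nondegenerate_iff_det_ne_zero (Module.Free.chooseBasis R M)).mp hB' ?_
  refine Matrix.det_eq_zero_of_odd_card ?_ (fun i => ?_) (fun i j => ?_)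
  · rwa [← Module.finrank_eq_card_chooseBasisIndex]
  · rw [BilinForm.toMatrix_apply]; exact hB _
  · rw [BilinForm.toMatrix_apply, BilinForm.toMatrix_apply, hB.neg_eq]

namespace ExteriorAlgebra

open CliffordAlgebra (contractLeft contractLeft_ι contractLeft_ι_mul contractLeft_algebraMap
  contractLeft_contractLeft)

variable {R M : Type*} [CommRing R] [AddCommGroup M] [Module R M]

theorem contractLeft_mem_exteriorPower (d : Dual R M) {n : ℕ} {x : ExteriorAlgebra R M}
    (hx : x ∈ ⋀[R]^(n + 1) M) : contractLeft d x ∈ ⋀[R]^n M := by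
  induction n generalizing x with
  | zero =>
    rw [zero_add, exteriorPower, pow_one] at hx
    obtain ⟨m, rfl⟩ := hx
    rw [contractLeft_ι, exteriorPower, pow_zero]
    exact Submodule.algebraMap_mem _
  | succ n ih =>
    rw [exteriorPower, pow_succ'] at hx
    induction hx using Submodule.mul_induction_on' with
    | mem_mul_mem a ha y hy =>
      obtain ⟨m, rfl⟩ := ha
      rw [contractLeft_ι_mul]
      refine sub_mem (Submodule.smul_mem _ _ hy) ?_
      rw [exteriorPower, pow_succ']
      exact Submodule.mul_mem_mul (LinearMap.mem_range_self _ m) (ih hy)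
    | add x _ y _ hx hy =>
      rw [map_add]
      exact add_mem hx hy

def contractForm (η : ExteriorAlgebra R M) : LinearMap.BilinForm R (Dual R M) :=
  (contractLeft.flip.compr₂ algebraMapInv.toLinearMap) ∘ₗ contractLeft.flip η

theorem contractForm_apply (η : ExteriorAlgebra R M) (f g : Dual R M) :
    contractForm η f g = algebraMapInv (contractLeft g (contractLeft f η)) := rfl

theorem isAlt_contractForm (η : ExteriorAlgebra R M) : (contractForm η).IsAlt := fun f => by
  rw [contractForm_apply, contractLeft_contractLeft, map_zero]

theorem contractLeft_eq_zero_of_forall_contractForm_eq_zero [Projective R M]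
    {η : ExteriorAlgebra R M} (hη : η ∈ ⋀[R]^2 M) {f : Dual R M}
    (hf : ∀ g, contractForm η f g = 0) : contractLeft f η = 0 := by
  have h1 := contractLeft_mem_exteriorPower f hη
  rw [exteriorPower, pow_one] at h1
  obtain ⟨m, hm⟩ := h1
  rw [← hm, ι_eq_zero_iff, ← forall_dual_apply_eq_zero_iff R]
  intro g
  simpa [contractForm_apply, ← hm, contractLeft_ι] using hf g

theorem map_id_sub_smulRight_apply (f : Dual R M) (z : M) (x : ExteriorAlgebra R M) :
    map (LinearMap.id - f.smulRight z) x = x - ι R z * contractLeft f x := by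
  induction x using CliffordAlgebra.left_induction with
  | algebraMap r => simp [contractLeft_algebraMap]
  | add x y hx hy =>
    rw [map_add, hx, hy, map_add, mul_add]
    abel
  | ι_mul x m hx =>
    have hzm : ι R z * ι R m = -(ι R m * ι R z) := eq_neg_of_add_eq_zero_left (ι_add_mul_swap z m)
    rw [map_mul, map_apply_ι, hx, contractLeft_ι_mul]
    simp only [LinearMap.sub_apply, LinearMap.id_apply, LinearMap.smulRight_apply, map_sub,
      map_smul, sub_mul, mul_sub, smul_mul_assoc, mul_smul_comm, ← mul_assoc, ι_sq_zero, zero_mul,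
      hzm, neg_mul, smul_zero]
    abel

theorem mem_map_ker_pow_of_contractLeft_eq_zero {f : Dual R M} {z : M} (hz : f z = 1) {n : ℕ}
    {η : ExteriorAlgebra R M} (hη : η ∈ ⋀[R]^n M) (hf : contractLeft f η = 0) :
    η ∈ (LinearMap.ker f).map (ι R) ^ n := by
  set π : M →ₗ[R] M := LinearMap.id - f.smulRight z
  have hπ : LinearMap.range π ≤ LinearMap.ker f := by
    rintro _ ⟨m, rfl⟩
    simp [π, hz]
  have hmap : (⋀[R]^n M).map (map π).toLinearMap ≤ (LinearMap.ker f).map (ι R) ^ n := by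
    rw [Submodule.map_pow, ι_range_map_map]
    exact pow_le_pow_left' (Submodule.map_mono hπ) n
  have hfix : map π η = η := by rw [map_id_sub_smulRight_apply, hf, mul_zero, sub_zero]
  exact hfix ▸ hmap (Submodule.mem_map_of_mem hη)

theorem map_ι_pow_eq_map_exteriorPower (V : Submodule R M) (n : ℕ) :
    V.map (ι R) ^ n = (⋀[R]^n V).map (map V.subtype).toLinearMap := by
  rw [Submodule.map_pow, ι_range_map_map, Submodule.range_subtype]

section Field

variable {K W : Type*} [Field K] [AddCommGroup W] [Module K W]

instance (V : Submodule K W) [FiniteDimensional K V] (n : ℕ) :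
    FiniteDimensional K ↥(V.map (ι K) ^ n) := by
  rw [map_ι_pow_eq_map_exteriorPower]
  infer_instance

theorem finrank_map_ι_pow (V : Submodule K W) [FiniteDimensional K V] (n : ℕ) :
    finrank K ↥(V.map (ι K) ^ n) = (finrank K V).choose n := by
  rw [map_ι_pow_eq_map_exteriorPower,
    ← (Submodule.equivMapOfInjective _ (map_injective_field V.ker_subtype) _).finrank_eq,
    exteriorPower.finrank_eq]

theorem exists_hyperplane_mem_map_ι_pow_two [FiniteDimensional K W]
    (hW : Odd (finrank K W)) {η : ExteriorAlgebra K W} (hη : η ∈ ⋀[K]^2 W) :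
    ∃ V : Submodule K W, finrank K V + 1 = finrank K W ∧ η ∈ V.map (ι K) ^ 2 := by
  have hsep : ¬ (contractForm η).SeparatingLeft :=
    (isAlt_contractForm η).not_separatingLeft (by rwa [Subspace.dual_finrank_eq])
  simp only [LinearMap.SeparatingLeft, not_forall] at hsep
  obtain ⟨f, hf, hf0⟩ := hsep
  obtain ⟨z, hz⟩ := LinearMap.surjective hf0 1
  exact ⟨LinearMap.ker f, f.finrank_ker_add_one_of_ne_zero hf0,
    mem_map_ker_pow_of_contractLeft_eq_zero hz hη
      (contractLeft_eq_zero_of_forall_contractForm_eq_zero hη hf)⟩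

end Field

end ExteriorAlgebra

theorem Submodule.exists_mem_ne_zero_of_finrank_add_lt {K A B₁ B₂ : Type*} [Field K]
    [AddCommGroup A] [Module K A] [AddCommGroup B₁] [Module K B₁] [AddCommGroup B₂] [Module K B₂]
    {D : Submodule K A} {T₁ : Submodule K B₁} {T₂ : Submodule K B₂} [FiniteDimensional K D]
    [FiniteDimensional K T₁] [FiniteDimensional K T₂] {g₁ : A →ₗ[K] B₁} {g₂ : A →ₗ[K] B₂}
    (h₁ : D.map g₁ ≤ T₁) (h₂ : D.map g₂ ≤ T₂) (h : finrank K T₁ + finrank K T₂ < finrank K D) :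
    ∃ x ∈ D, x ≠ 0 ∧ g₁ x = 0 ∧ g₂ x = 0 := by
  let φ : D →ₗ[K] T₁ × T₂ :=
    ((g₁.domRestrict D).codRestrict T₁ fun x => h₁ (mem_map_of_mem x.2)).prod
      ((g₂.domRestrict D).codRestrict T₂ fun x => h₂ (mem_map_of_mem x.2))
  obtain ⟨x, hx, hx0⟩ := exists_mem_ne_zero_of_ne_bot
    (φ.ker_ne_bot_of_finrank_lt (by rwa [Module.finrank_prod]))
  rw [LinearMap.mem_ker, Prod.ext_iff] at hx
  exact ⟨x, x.2, by simpa using hx0, congrArg Subtype.val hx.1, congrArg Subtype.val hx.2⟩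

open ExteriorAlgebra in
/-- For any two 2-forms `η₁, η₂ ∈ Λ²(W*)` on a 5-dimensional
vector space `W*` (here called `W`), there is a nonzero 2-form `ω ∈ Λ²(W*)` with
`ω ∧ η₁ = 0` and `ω ∧ η₂ = 0` (the wedge products being taken in `Λ⁴(W*)`); i.e.
the map `Λ²(W*) → Λ⁴(W*) ⊕ Λ⁴(W*)`, `ω ↦ (ω ∧ η₁, ω ∧ η₂)` has nonzero kernel.
The degree-2 part of the exterior algebra is the submodule `(range ι)²`. -/
theorem exists_common_annihilating_two_form (K : Type*) [Field K]
    (W : Type*) [AddCommGroup W] [Module K W] (h5 : Module.finrank K W = 5)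
    (η₁ η₂ : ExteriorAlgebra K W)
    (h₁ : η₁ ∈ (LinearMap.range (ExteriorAlgebra.ι K (M := W)) ^ 2 :
      Submodule K (ExteriorAlgebra K W)))
    (h₂ : η₂ ∈ (LinearMap.range (ExteriorAlgebra.ι K (M := W)) ^ 2 :
      Submodule K (ExteriorAlgebra K W))) :
    ∃ ω ∈ (LinearMap.range (ExteriorAlgebra.ι K (M := W)) ^ 2 :
        Submodule K (ExteriorAlgebra K W)),
      ω ≠ 0 ∧ ω * η₁ = 0 ∧ ω * η₂ = 0 := by
  have : FiniteDimensional K W := Module.finite_of_finrank_eq_succ h5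
  have hodd : Odd (finrank K W) := by rw [h5]; decide
  obtain ⟨V₁, hV₁, hη₁⟩ := exists_hyperplane_mem_map_ι_pow_two hodd h₁
  obtain ⟨V₂, hV₂, hη₂⟩ := exists_hyperplane_mem_map_ι_pow_two hodd h₂
  have hU : 3 ≤ finrank K ↥(V₁ ⊓ V₂) := by
    have := Submodule.finrank_sup_add_finrank_inf_eq V₁ V₂
    have := (V₁ ⊔ V₂).finrank_le
    omega
  have hmul {V : Submodule K W} (hV : V₁ ⊓ V₂ ≤ V) {η : ExteriorAlgebra K W}
      (hη : η ∈ V.map (ι K) ^ 2) :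
      ((V₁ ⊓ V₂).map (ι K) ^ 2).map (LinearMap.mulRight K η) ≤ V.map (ι K) ^ 4 := by
    rintro _ ⟨ω, hω, rfl⟩
    rw [show 4 = 2 + 2 from rfl, pow_add]
    exact Submodule.mul_mem_mul (pow_le_pow_left' (Submodule.map_mono hV) 2 hω) hη
  obtain ⟨ω, hω, hω0, hω₁, hω₂⟩ := Submodule.exists_mem_ne_zero_of_finrank_add_lt
    (hmul inf_le_left hη₁) (hmul inf_le_right hη₂) (by
      rw [finrank_map_ι_pow, finrank_map_ι_pow, finrank_map_ι_pow,
        show finrank K V₁ = 4 by omega, show finrank K V₂ = 4 by omega]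
      exact lt_of_lt_of_le (by decide) (Nat.choose_le_choose 2 hU))
  exact ⟨ω, pow_le_pow_left' LinearMap.map_le_range 2 hω, hω0, hω₁, hω₂⟩
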